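/- Let {p_ℓ : ℓ ∈ 𝒜} be a probability distribution on a countable alphabet 𝒜, let X_1,…,X_n be an i.i.d. sample from it, and let r be an integer with 0 ≤ r ≤ n−1. Then the bias of Turing's estimator satisfies E[T_{r,n} − π_{r,n}] = C(n,r) Σ_{ℓ∈𝒜} p_ℓ^{r+1} (1−p_ℓ)^{n−r−1} (p_ℓ − r/n), where C(n,r) denotes the binomial coefficient n choose r. -/

import Mathlib

open Filter Topology

noncomputable section

variable {A : Type*} [DecidableEq A]

/-- `y_{ℓ,n}`: the number of times letter `ℓ` appears in the sample `ω`. -/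
def occ {n : ℕ} (ω : Fin n → A) (ℓ : A) : ℕ :=
  (Finset.univ.filter fun i => ω i = ℓ).card

/-- `N_{r,n}`: the number of letters appearing exactly `r` times in `ω` (valid for `r ≥ 1`). -/
def Ncount {n : ℕ} (ω : Fin n → A) (r : ℕ) : ℕ :=
  ((Finset.univ.image ω).filter fun ℓ => occ ω ℓ = r).card

/-- `π_{r,n}`: the `r`-th occupancy probability. -/
def occProb {n : ℕ} (p : A → ℝ) (ω : Fin n → A) (r : ℕ) : ℝ :=
  ∑' ℓ : A, p ℓ * (if occ ω ℓ = r then 1 else 0)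

/-- `T_{r,n}`: Turing's estimator. -/
def turing {n : ℕ} (ω : Fin n → A) (r : ℕ) : ℝ :=
  ((r : ℝ) + 1) * (Ncount ω (r + 1) : ℝ) / (n : ℝ)

/-!
Both `T_{r,n}` and `π_{r,n}` are nonnegative combinations `Σ_ℓ c_ℓ 1[y_{ℓ,n} = k]`, so by Tonelli
their expectations are `Σ_ℓ c_ℓ P(y_{ℓ,n} = k)`, and `P(y_{ℓ,n} = k) = C(n,k) p_ℓ^k (1-p_ℓ)^(n-k)`.
Hence `E T_{r,n} = Σ_ℓ (r+1)/n C(n,r+1) p_ℓ^(r+1) (1-p_ℓ)^(n-r-1)` and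
`E π_{r,n} = Σ_ℓ p_ℓ C(n,r) p_ℓ^r (1-p_ℓ)^(n-r)`; the identity `(r+1) C(n,r+1) = (n-r) C(n,r)`
turns the difference of the summands into `C(n,r) p_ℓ^(r+1) (1-p_ℓ)^(n-r-1) (p_ℓ - r/n)`.
-/

open Finset

theorem hasSum_fin_pi_prod {α : Type*} {n : ℕ} {f : Fin n → α → ℝ} {s : Fin n → ℝ}
    (hf0 : ∀ i a, 0 ≤ f i a) (hf : ∀ i, HasSum (f i) (s i)) :
    HasSum (fun ω : Fin n → α => ∏ i, f i (ω i)) (∏ i, s i) := by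
  induction n with
  | zero => simp
  | succ n ih =>
    have htail := ih (fun i => hf0 i.succ) (fun i => hf i.succ)
    have hsummable := (hf 0).summable.mul_of_nonneg htail.summable (fun a => hf0 0 a)
        fun ω => prod_nonneg fun i _ => hf0 i.succ (ω i)
    have hcons := (hf 0).mul htail hsummable
    simpa [Function.comp_def, Fin.prod_univ_succ, Fin.tail] using
      (Fin.consEquiv fun _ => α).symm.hasSum_iff.mpr hcons

theorem prod_ite_mem_eq_pow_mul_pow {M : Type*} [CommMonoid M] {n k : ℕ} {S : Finset (Fin n)}
    (hS : S.card = k) (x y : M) :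
    ∏ i, (if i ∈ S then x else y) = x ^ k * y ^ (n - k) := by
  rw [prod_ite, prod_const, prod_const, filter_mem_eq_inter, univ_inter, filter_not,
    filter_mem_eq_inter, univ_inter, card_sdiff, inter_univ, hS, card_univ, Fintype.card_fin]

theorem hasSum_tsum_swap_of_nonneg {α β : Type*} {F : α → β → ℝ} {g : α → ℝ} {s : ℝ}
    (hF0 : ∀ a b, 0 ≤ F a b) (hF : ∀ a, HasSum (F a) (g a)) (hg : HasSum g s) :
    HasSum (fun b => ∑' a, F a b) s := by
  have hsum : Summable (Function.uncurry F) :=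
    (summable_prod_of_nonneg fun x => hF0 x.1 x.2).2
      ⟨fun a => (hF a).summable, by simpa only [(hF _).tsum_eq] using hg.summable⟩
  obtain ⟨hcols, hswap⟩ := (summable_prod_of_nonneg fun y : β × α => hF0 y.2 y.1).1 hsum.prod_symm
  rw [hswap.hasSum_iff, hsum.tsum_comm' (fun a => (hF a).summable) hcols]
  simp_rw [(hF _).tsum_eq]
  exact hg.tsum_eq

def binomProb (n k : ℕ) (x : ℝ) : ℝ := n.choose k * x ^ k * (1 - x) ^ (n - k)

theorem binomProb_nonneg {x : ℝ} (hx0 : 0 ≤ x) (hx1 : x ≤ 1) (n k : ℕ) :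
    0 ≤ binomProb n k x := by
  unfold binomProb
  have : 0 ≤ 1 - x := by linarith
  positivity

theorem binomProb_le_choose_mul_pow {x : ℝ} (hx0 : 0 ≤ x) (hx1 : x ≤ 1) (n k : ℕ) :
    binomProb n k x ≤ n.choose k * x ^ k := by
  unfold binomProb
  have : 0 ≤ 1 - x := by linarith
  exact mul_le_of_le_one_right (by positivity) (pow_le_one₀ this (by linarith))

theorem summable_mul_binomProb {α : Type*} {p : α → ℝ} (hp0 : ∀ ℓ, 0 ≤ p ℓ) (hp1 : ∀ ℓ, p ℓ ≤ 1)
    {c : α → ℝ} (hc0 : ∀ ℓ, 0 ≤ c ℓ) {k : ℕ} (hc : Summable fun ℓ => c ℓ * p ℓ ^ k) (n : ℕ) :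
    Summable fun ℓ => c ℓ * binomProb n k (p ℓ) := by
  refine .of_nonneg_of_le (fun ℓ => mul_nonneg (hc0 ℓ) (binomProb_nonneg (hp0 ℓ) (hp1 ℓ) n k))
    (fun ℓ => ?_) (hc.mul_left (n.choose k : ℝ))
  calc c ℓ * binomProb n k (p ℓ) ≤ c ℓ * (n.choose k * p ℓ ^ k) :=
        mul_le_mul_of_nonneg_left (binomProb_le_choose_mul_pow (hp0 ℓ) (hp1 ℓ) n k) (hc0 ℓ)
    _ = n.choose k * (c ℓ * p ℓ ^ k) := by ring

theorem div_mul_binomProb_succ_sub_mul_binomProb {n r : ℕ} (hr : r + 1 ≤ n) (x : ℝ) :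
    (r + 1) / n * binomProb n (r + 1) x - x * binomProb n r x
      = n.choose r * (x ^ (r + 1) * (1 - x) ^ (n - r - 1) * (x - r / n)) := by
  obtain ⟨m, rfl⟩ := Nat.exists_eq_add_of_le hr
  have hchoose :
      ((r + 1 + m).choose (r + 1) : ℝ) * (r + 1) = (r + 1 + m).choose r * (m + 1) := by
    exact_mod_cast (Nat.choose_succ_right_eq (r + 1 + m) r).trans (by congr 1; omega)
  have hsub : r + 1 + m - r = m + 1 := by omega
  simp only [binomProb, hsub, Nat.add_sub_cancel_left]
  field_simp
  push_cast
  linear_combination (x ^ (r + 1) * (1 - x) ^ m) * hchoose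

section Occupancy

variable {p : A → ℝ}

theorem hasSum_mul_ite_eq_ite_mem (hp1 : HasSum p 1) (ℓ : A) {n : ℕ} (i : Fin n)
    (S : Finset (Fin n)) :
    HasSum (fun a => p a * if (i ∈ S ↔ a = ℓ) then 1 else 0) (if i ∈ S then p ℓ else 1 - p ℓ) := by
  by_cases hi : i ∈ S
  · simpa [hi] using hasSum_single (f := fun a => p a * if a = ℓ then 1 else 0) ℓ (by simp_all)
  · have hcompl : (fun a => p a * if (i ∈ S ↔ a = ℓ) then 1 else 0)
        = fun a => p a - if a = ℓ then p ℓ else 0 := by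
      ext a
      by_cases ha : a = ℓ <;> simp [hi, ha]
    rw [hcompl, if_neg hi]
    exact hp1.sub (hasSum_ite_eq ℓ (p ℓ))

theorem prod_mul_ite_mem_iff_eq {n : ℕ} (ℓ : A) (ω : Fin n → A) (S : Finset (Fin n)) :
    ∏ i, (p (ω i) * if (i ∈ S ↔ ω i = ℓ) then 1 else 0)
      = (∏ i, p (ω i)) * if S = univ.filter (ω · = ℓ) then 1 else 0 := by
  rw [prod_mul_distrib, prod_boole]
  congr 2
  simp [Finset.ext_iff]

theorem hasSum_prod_mul_ite_occ_eq (hp0 : ∀ ℓ, 0 ≤ p ℓ) (hp1 : HasSum p 1) (n k : ℕ) (ℓ : A) :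
    HasSum (fun ω : Fin n → A => (∏ i, p (ω i)) * if occ ω ℓ = k then 1 else 0)
      (binomProb n k (p ℓ)) := by
  -- Split the samples according to the set `S` of positions at which `ℓ` occurs.
  have hS : ∀ S ∈ (univ : Finset (Fin n)).powersetCard k,
      HasSum (fun ω : Fin n → A => ∏ i, (p (ω i) * if (i ∈ S ↔ ω i = ℓ) then 1 else 0))
        (p ℓ ^ k * (1 - p ℓ) ^ (n - k)) := by
    intro S hS
    rw [← prod_ite_mem_eq_pow_mul_pow (mem_powersetCard_univ.1 hS)]
    exact hasSum_fin_pi_prod (f := fun i a => p a * if (i ∈ S ↔ a = ℓ) then 1 else 0)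
      (fun i a => mul_nonneg (hp0 a) (by positivity))
      fun i => hasSum_mul_ite_eq_ite_mem hp1 ℓ i S
  convert hasSum_sum hS using 1
  · ext ω
    simp_rw [prod_mul_ite_mem_iff_eq, ← mul_sum, sum_ite_eq', mem_powersetCard_univ]
    rfl
  · rw [sum_const, card_powersetCard, card_univ, Fintype.card_fin, nsmul_eq_mul, binomProb,
      mul_assoc]

theorem hasSum_prod_mul_tsum_ite_occ_eq (hp0 : ∀ ℓ, 0 ≤ p ℓ) (hp1 : HasSum p 1) {c : A → ℝ}
    (hc0 : ∀ ℓ, 0 ≤ c ℓ) {n k : ℕ} (hc : Summable fun ℓ => c ℓ * binomProb n k (p ℓ)) :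
    HasSum (fun ω : Fin n → A => (∏ i, p (ω i)) * ∑' ℓ, c ℓ * if occ ω ℓ = k then 1 else 0)
      (∑' ℓ, c ℓ * binomProb n k (p ℓ)) := by
  have h := hasSum_tsum_swap_of_nonneg
    (F := fun ℓ (ω : Fin n → A) => c ℓ * ((∏ i, p (ω i)) * if occ ω ℓ = k then 1 else 0))
    (fun ℓ ω => mul_nonneg (hc0 ℓ) (mul_nonneg (prod_nonneg fun i _ => hp0 _) (by positivity)))
    (fun ℓ => (hasSum_prod_mul_ite_occ_eq hp0 hp1 n k ℓ).mul_left (c ℓ)) hc.hasSum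
  simpa only [mul_left_comm (c _), tsum_mul_left] using h

theorem hasSum_ite_occ_eq_Ncount {n k : ℕ} (ω : Fin n → A) (hk : k ≠ 0) :
    HasSum (fun ℓ => if occ ω ℓ = k then (1 : ℝ) else 0) (Ncount ω k) := by
  have hzero : ∀ ℓ ∉ univ.image ω, (if occ ω ℓ = k then (1 : ℝ) else 0) = 0 := by
    intro ℓ hℓ
    have hocc : occ ω ℓ = 0 := card_eq_zero.2 <| filter_eq_empty_iff.2 fun i _ hi =>
      hℓ (hi ▸ mem_image_of_mem ω (mem_univ i))
    simp [hocc, Ne.symm hk]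
  simpa [Ncount, sum_boole] using hasSum_sum_of_ne_finset_zero hzero

theorem turing_eq_tsum {n : ℕ} (ω : Fin n → A) (r : ℕ) :
    turing ω r = ∑' ℓ, ((r : ℝ) + 1) / n * if occ ω ℓ = r + 1 then 1 else 0 := by
  rw [tsum_mul_left, (hasSum_ite_occ_eq_Ncount ω r.succ_ne_zero).tsum_eq, turing,
    mul_div_right_comm]

end Occupancy

theorem turing_bias_general {A : Type*} [DecidableEq A]
    (p : A → ℝ) (hp0 : ∀ ℓ, 0 ≤ p ℓ) (hp1 : HasSum p 1)
    (n r : ℕ) (hr : r + 1 ≤ n) :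
    ∑' ω : Fin n → A, (∏ i, p (ω i)) * (turing ω r - occProb p ω r)
      = (n.choose r : ℝ) *
          ∑' ℓ : A, p ℓ ^ (r + 1) * (1 - p ℓ) ^ (n - r - 1) * (p ℓ - (r : ℝ) / (n : ℝ)) := by
  have hp_le : ∀ ℓ, p ℓ ≤ 1 := fun ℓ => le_hasSum hp1 ℓ fun i _ => hp0 i
  have hpow : Summable fun ℓ => p ℓ ^ (r + 1) :=
    .of_nonneg_of_le (fun ℓ => pow_nonneg (hp0 ℓ) _)
      (fun ℓ => pow_le_of_le_one (hp0 ℓ) (hp_le ℓ) r.succ_ne_zero) hp1.summable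
  have hcoef : (0 : ℝ) ≤ (r + 1) / n := by positivity
  have hT_sum := summable_mul_binomProb hp0 hp_le (fun _ => hcoef)
    (hpow.mul_left (((r : ℝ) + 1) / n)) n
  have hπ_sum := summable_mul_binomProb hp0 hp_le hp0 (k := r)
    (by simpa only [← pow_succ'] using hpow) n
  have hT := hasSum_prod_mul_tsum_ite_occ_eq hp0 hp1 (fun _ => hcoef) hT_sum
  have hπ := hasSum_prod_mul_tsum_ite_occ_eq hp0 hp1 hp0 hπ_sum
  simp only [← turing_eq_tsum] at hT
  calc ∑' ω : Fin n → A, (∏ i, p (ω i)) * (turing ω r - occProb p ω r)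
      = ∑' ℓ, (r + 1) / n * binomProb n (r + 1) (p ℓ) - ∑' ℓ, p ℓ * binomProb n r (p ℓ) := by
        simpa only [mul_sub, occProb] using (hT.sub hπ).tsum_eq
    _ = ∑' ℓ, ((r + 1) / n * binomProb n (r + 1) (p ℓ) - p ℓ * binomProb n r (p ℓ)) :=
        (hT_sum.tsum_sub hπ_sum).symm
    _ = _ := by
        simp only [div_mul_binomProb_succ_sub_mul_binomProb hr, tsum_mul_left]

/-- for a probability distribution `p` on a countable alphabet `A`, an i.i.d.
sample of size `n` and `0 ≤ r ≤ n - 1`, the bias of Turing's estimator satisfies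
`E[T_{r,n} - π_{r,n}] = (n choose r) Σ_ℓ p_ℓ^{r+1} (1-p_ℓ)^{n-r-1} (p_ℓ - r/n)`. -/
theorem turing_bias {A : Type*} [Countable A] [DecidableEq A]
    (p : A → ℝ) (hp0 : ∀ ℓ, 0 ≤ p ℓ) (hp1 : HasSum p 1)
    (n r : ℕ) (hr : r + 1 ≤ n) :
    ∑' ω : Fin n → A, (∏ i, p (ω i)) * (turing ω r - occProb p ω r)
      = (n.choose r : ℝ) *
          ∑' ℓ : A, p ℓ ^ (r + 1) * (1 - p ℓ) ^ (n - r - 1) * (p ℓ - (r : ℝ) / (n : ℝ)) :=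
  turing_bias_general p hp0 hp1 n r hr
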